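/- Let n ∈ ℕ and α, β > −1 be real, and define Y(z) = (1−tanh z)^(α/2)·(1+tanh z)^(β/2)·P_n^{(α,β)}(tanh z) for z ∈ ℝ. Then Y is twice differentiable on ℝ and satisfies Y''(z) + Ω(z)Y(z) = 0 for all z ∈ ℝ, where Ω(z) = (1/4)·[(L²−1)(1−tanh²z) − 2α²(1+tanh z) − 2β²(1−tanh z)]. -/

import Mathlib

/-! In the variables `u = (x - 1) / 2`, `v = (x + 1) / 2` the Jacobi operator
`(1 - x²) d² + (β - α - (α + β + 2) x) d` sends `uᵃ vᵇ` to a multiple of itself plus multiples of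
its neighbours `uᵃ⁻¹ vᵇ⁺¹` and `uᵃ⁺¹ vᵇ⁻¹`. The ratio of consecutive coefficients of `P_n` makes
the neighbour terms cancel in pairs, which gives the Jacobi equation
`(1 - x²) P'' + (β - α - (α + β + 2) x) P' + n (n + α + β + 1) P = 0`.
Then `x = tanh z` has `dx/dz = 1 - x²`, and the weight `(1 - x)^(α/2) (1 + x)^(β/2)` is exactly what
removes the first-order term (a Liouville transformation); the potential that remains is `Ω`, since
`L² - 1 = 4 n (n + α + β + 1) + (α + β) (α + β + 2)`. -/

open Real Filter Set

/-- Generalized binomial coefficient `C(t, k) = t(t-1)⋯(t-k+1)/k!`. -/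
noncomputable def genBinom (t : ℝ) (k : ℕ) : ℝ :=
  (∏ i ∈ Finset.range k, (t - i)) / (Nat.factorial k)

/-- The Jacobi polynomial `P_n^{(α,β)}(x)`. -/
noncomputable def jacobiP (n : ℕ) (α β : ℝ) (x : ℝ) : ℝ :=
  ∑ m ∈ Finset.range (n + 1),
    genBinom (n + α) m * genBinom (n + β) (n - m) * ((x - 1) / 2) ^ (n - m) * ((x + 1) / 2) ^ m

open Finset

lemma genBinom_succ (t : ℝ) (k : ℕ) :
    genBinom t (k + 1) = genBinom t k * (t - k) / (k + 1) := by
  rw [genBinom, genBinom, prod_range_succ, Nat.factorial_succ]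
  push_cast
  field_simp

noncomputable def jacobiCoeff (n : ℕ) (α β : ℝ) (m : ℕ) : ℝ :=
  genBinom (n + α) m * genBinom (n + β) (n - m)

lemma jacobiCoeff_succ {n m : ℕ} (α β : ℝ) (h : m < n) :
    jacobiCoeff n α β (m + 1) * ((m + 1 : ℕ) : ℝ) * (((m + 1 : ℕ) : ℝ) + β) =
      jacobiCoeff n α β m * ((n - m : ℕ) : ℝ) * (((n - m : ℕ) : ℝ) + α) := by
  obtain ⟨j, hj⟩ : ∃ j, n = m + 1 + j := ⟨n - (m + 1), by omega⟩
  subst hj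
  rw [jacobiCoeff, jacobiCoeff, show m + 1 + j - m = j + 1 by omega,
    show m + 1 + j - (m + 1) = j by omega, genBinom_succ, genBinom_succ]
  push_cast
  field_simp
  ring

noncomputable def jacobiMono (a b : ℕ) (x : ℝ) : ℝ := ((x - 1) / 2) ^ a * ((x + 1) / 2) ^ b

-- At `a = 0` the truncated `a - 1` is harmless: its term carries the factor `a = 0`.
noncomputable def jacobiMonoDeriv (a b : ℕ) (x : ℝ) : ℝ :=
  (a * jacobiMono (a - 1) b x + b * jacobiMono a (b - 1) x) / 2

noncomputable def jacobiMonoDeriv2 (a b : ℕ) (x : ℝ) : ℝ :=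
  (a * jacobiMonoDeriv (a - 1) b x + b * jacobiMonoDeriv a (b - 1) x) / 2

lemma hasDerivAt_jacobiMono (a b : ℕ) (x : ℝ) :
    HasDerivAt (jacobiMono a b) (jacobiMonoDeriv a b x) x := by
  have hu : HasDerivAt (fun x : ℝ => (x - 1) / 2) (1 / 2) x := by
    simpa using ((hasDerivAt_id x).sub_const 1).div_const 2
  have hv : HasDerivAt (fun x : ℝ => (x + 1) / 2) (1 / 2) x := by
    simpa using ((hasDerivAt_id x).add_const 1).div_const 2
  refine ((hu.pow a).mul (hv.pow b)).congr_deriv ?_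
  simp only [jacobiMonoDeriv, jacobiMono, Pi.pow_apply]
  ring

lemma hasDerivAt_jacobiMonoDeriv (a b : ℕ) (x : ℝ) :
    HasDerivAt (jacobiMonoDeriv a b) (jacobiMonoDeriv2 a b x) x := by
  refine ((((hasDerivAt_jacobiMono _ _ x).const_mul (a : ℝ)).add
    ((hasDerivAt_jacobiMono _ _ x).const_mul (b : ℝ))).div_const 2).congr_deriv ?_
  rfl

lemma jacobiMono_ode (α β : ℝ) (a b : ℕ) (x : ℝ) :
    (1 - x ^ 2) * jacobiMonoDeriv2 a b x + (β - α - (α + β + 2) * x) * jacobiMonoDeriv a b x =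
      -(2 * a * b + (β + 1) * a + (α + 1) * b) * jacobiMono a b x
        - a * (a + α) * jacobiMono (a - 1) (b + 1) x
        - b * (b + β) * jacobiMono (a + 1) (b - 1) x := by
  simp only [jacobiMonoDeriv2, jacobiMonoDeriv, jacobiMono]
  rcases a with _ | _ | a <;> rcases b with _ | _ | b <;> simp <;> ring

lemma sum_range_mul_succ_eq {n : ℕ} (d e g : ℕ → ℝ) (hd : d n = 0) (he : e 0 = 0)
    (h : ∀ m < n, e (m + 1) = d m) :
    ∑ m ∈ range (n + 1), d m * g (m + 1) = ∑ m ∈ range (n + 1), e m * g m := by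
  rw [sum_range_succ, hd, sum_range_succ', he, zero_mul, zero_mul, add_zero, add_zero]
  exact sum_congr rfl fun m hm => by rw [h m (mem_range.1 hm)]

lemma jacobiP_eq_sum (n : ℕ) (α β x : ℝ) :
    jacobiP n α β x = ∑ m ∈ range (n + 1), jacobiCoeff n α β m * jacobiMono (n - m) m x := by
  simp only [jacobiP, jacobiCoeff, jacobiMono, mul_assoc]

noncomputable def jacobiPDeriv (n : ℕ) (α β x : ℝ) : ℝ :=
  ∑ m ∈ range (n + 1), jacobiCoeff n α β m * jacobiMonoDeriv (n - m) m x

noncomputable def jacobiPDeriv2 (n : ℕ) (α β x : ℝ) : ℝ :=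
  ∑ m ∈ range (n + 1), jacobiCoeff n α β m * jacobiMonoDeriv2 (n - m) m x

lemma hasDerivAt_jacobiP (n : ℕ) (α β x : ℝ) :
    HasDerivAt (jacobiP n α β) (jacobiPDeriv n α β x) x := by
  rw [show jacobiP n α β = _ from funext (jacobiP_eq_sum n α β)]
  exact HasDerivAt.fun_sum fun _ _ => (hasDerivAt_jacobiMono _ _ x).const_mul _

lemma hasDerivAt_jacobiPDeriv (n : ℕ) (α β x : ℝ) :
    HasDerivAt (jacobiPDeriv n α β) (jacobiPDeriv2 n α β x) x :=
  HasDerivAt.fun_sum fun _ _ => (hasDerivAt_jacobiMonoDeriv _ _ x).const_mul _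

theorem jacobiP_ode (n : ℕ) (α β x : ℝ) :
    (1 - x ^ 2) * jacobiPDeriv2 n α β x + (β - α - (α + β + 2) * x) * jacobiPDeriv n α β x
      + n * (n + α + β + 1) * jacobiP n α β x = 0 := by
  set c := jacobiCoeff n α β
  set g : ℕ → ℝ := fun m => jacobiMono (n - m) m x
  set d : ℕ → ℝ := fun m => c m * ((n - m : ℕ) : ℝ) * (((n - m : ℕ) : ℝ) + α)
  set e : ℕ → ℝ := fun m => c m * (m : ℝ) * ((m : ℝ) + β)
  have hterm : ∀ m ∈ range (n + 1),
      (1 - x ^ 2) * (c m * jacobiMonoDeriv2 (n - m) m x)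
        + (β - α - (α + β + 2) * x) * (c m * jacobiMonoDeriv (n - m) m x)
        + n * (n + α + β + 1) * (c m * jacobiMono (n - m) m x)
      = (c m * (n * (n + α + β + 1) - (2 * ((n - m : ℕ) : ℝ) * m + (β + 1) * ((n - m : ℕ) : ℝ)
          + (α + 1) * m)) * g m - d m * g (m + 1)) - e m * g (m - 1) := by
    intro m hm
    have hmn : m ≤ n := Nat.lt_succ_iff.1 (mem_range.1 hm)
    have hg : e m * jacobiMono (n - m + 1) (m - 1) x = e m * g (m - 1) := by
      rcases m with _ | m
      · simp [e]
      · simp only [g, show n - (m + 1) + 1 = n - m by omega, Nat.add_sub_cancel]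
    rw [← hg]
    linear_combination c m * jacobiMono_ode α β (n - m) m x
  have hshift := sum_range_mul_succ_eq d e g (by simp [d]) (by simp [e])
    fun m hm => jacobiCoeff_succ α β hm
  -- the same shift applied to `m ↦ g (m - 1)` moves the `e`-terms back onto `g m`
  have hshift' := sum_range_mul_succ_eq d e (fun m => g (m - 1)) (by simp [d]) (by simp [e])
    fun m hm => jacobiCoeff_succ α β hm
  simp only [Nat.add_sub_cancel] at hshift'
  rw [jacobiPDeriv2, jacobiPDeriv, jacobiP_eq_sum, mul_sum, mul_sum, mul_sum,
    ← sum_add_distrib, ← sum_add_distrib, sum_congr rfl hterm, sum_sub_distrib, sum_sub_distrib,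
    hshift, ← hshift', ← sum_sub_distrib, ← sum_sub_distrib]
  refine sum_eq_zero fun m hm => ?_
  have hcast : ((n - m : ℕ) : ℝ) = n - m := Nat.cast_sub (Nat.lt_succ_iff.1 (mem_range.1 hm))
  simp only [d, e, hcast]
  ring

lemma hasDerivAt_tanh (x : ℝ) : HasDerivAt tanh (1 - tanh x ^ 2) x := by
  have h := (hasDerivAt_sinh x).div (hasDerivAt_cosh x) (cosh_pos x).ne'
  rw [show sinh / cosh = tanh from funext fun y => (tanh_eq_sinh_div_cosh y).symm] at h
  refine h.congr_deriv ?_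
  have hc := (cosh_pos x).ne'
  rw [tanh_eq_sinh_div_cosh]
  field_simp

noncomputable def jacobiWeight (α β t : ℝ) : ℝ := (1 - t) ^ (α / 2) * (1 + t) ^ (β / 2)

lemma hasDerivAt_jacobiWeight_comp_tanh (α β z : ℝ) :
    HasDerivAt (fun z => jacobiWeight α β (tanh z))
      (jacobiWeight α β (tanh z) * ((β * (1 - tanh z) - α * (1 + tanh z)) / 2)) z := by
  have hm : 0 < 1 - tanh z := sub_pos.2 (tanh_lt_one z)
  have hp : 0 < 1 + tanh z := by linarith [neg_one_lt_tanh z]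
  have ht := hasDerivAt_tanh z
  refine (((ht.const_sub 1).rpow_const (p := α / 2) (Or.inl hm.ne')).mul
    ((ht.const_add 1).rpow_const (p := β / 2) (Or.inl hp.ne'))).congr_deriv ?_
  rw [jacobiWeight, rpow_sub_one hm.ne', rpow_sub_one hp.ne']
  field_simp
  ring

lemma hasDerivAt_jacobiWeight_mul_comp_tanh {F : ℝ → ℝ} {F' : ℝ} (α β z : ℝ)
    (hF : HasDerivAt F F' (tanh z)) :
    HasDerivAt (fun z => jacobiWeight α β (tanh z) * F (tanh z))
      (jacobiWeight α β (tanh z) * ((1 - tanh z ^ 2) * F'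
        + (β * (1 - tanh z) - α * (1 + tanh z)) / 2 * F (tanh z))) z := by
  refine ((hasDerivAt_jacobiWeight_comp_tanh α β z).mul
    (hF.comp z (hasDerivAt_tanh z))).congr_deriv ?_
  simp only [Function.comp_apply]
  ring

theorem jacobiWeight_mul_comp_tanh_ode {P P' P'' Y : ℝ → ℝ} {α β μ : ℝ}
    (hP : ∀ x, HasDerivAt P (P' x) x) (hP' : ∀ x, HasDerivAt P' (P'' x) x)
    (hode : ∀ x, (1 - x ^ 2) * P'' x + (β - α - (α + β + 2) * x) * P' x + μ * P x = 0)
    (hY : ∀ z, Y z = jacobiWeight α β (tanh z) * P (tanh z)) :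
    (∀ z, DifferentiableAt ℝ Y z ∧ DifferentiableAt ℝ (deriv Y) z) ∧
    ∀ z, deriv (deriv Y) z + (1 / 4) * ((4 * μ + (α + β) * (α + β + 2)) * (1 - tanh z ^ 2)
      - 2 * α ^ 2 * (1 + tanh z) - 2 * β ^ 2 * (1 - tanh z)) * Y z = 0 := by
  set Q : ℝ → ℝ := fun x => (1 - x ^ 2) * P' x + (β * (1 - x) - α * (1 + x)) / 2 * P x
  have hQ : ∀ x, HasDerivAt Q (-(2 * x) * P' x + (1 - x ^ 2) * P'' x
      - (α + β) / 2 * P x + (β * (1 - x) - α * (1 + x)) / 2 * P' x) x := fun x => by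
    have hsq : HasDerivAt (fun x : ℝ => 1 - x ^ 2) (-(2 * x)) x := by
      simpa using (hasDerivAt_pow 2 x).const_sub 1
    have hlin : HasDerivAt (fun x : ℝ => (β * (1 - x) - α * (1 + x)) / 2) ((-β - α) / 2) x := by
      simpa using ((((hasDerivAt_id x).const_sub 1).const_mul β).sub
        (((hasDerivAt_id x).const_add 1).const_mul α)).div_const 2
    refine ((hsq.mul (hP' x)).add (hlin.mul (hP x))).congr_deriv ?_
    ring
  have hY' : ∀ z, HasDerivAt Y (jacobiWeight α β (tanh z) * Q (tanh z)) z := fun z => by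
    rw [show Y = _ from funext hY]
    exact hasDerivAt_jacobiWeight_mul_comp_tanh α β z (hP _)
  have hderivY : deriv Y = fun z => jacobiWeight α β (tanh z) * Q (tanh z) :=
    funext fun z => (hY' z).deriv
  have hY'' := fun z => hderivY ▸ hasDerivAt_jacobiWeight_mul_comp_tanh α β z (hQ _)
  refine ⟨fun z => ⟨(hY' z).differentiableAt, (hY'' z).differentiableAt⟩, fun z => ?_⟩
  rw [(hY'' z).deriv, hY z]
  linear_combination jacobiWeight α β (tanh z) * (1 - tanh z ^ 2) * hode (tanh z)

theorem stmt4_general (n : ℕ) (α β : ℝ)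
    (Y : ℝ → ℝ)
    (hY : ∀ z : ℝ,
      Y z = (1 - Real.tanh z) ^ (α / 2) * (1 + Real.tanh z) ^ (β / 2) *
        jacobiP n α β (Real.tanh z))
    (L : ℝ) (hL : L = 2 * n + α + β + 1)
    (Ω : ℝ → ℝ)
    (hΩ : ∀ z : ℝ,
      Ω z = (1 / 4) * ((L ^ 2 - 1) * (1 - Real.tanh z ^ 2)
        - 2 * α ^ 2 * (1 + Real.tanh z) - 2 * β ^ 2 * (1 - Real.tanh z))) :
    (∀ z : ℝ, DifferentiableAt ℝ Y z ∧ DifferentiableAt ℝ (deriv Y) z) ∧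
    ∀ z : ℝ, deriv (deriv Y) z + Ω z * Y z = 0 := by
  obtain ⟨hdiff, hode⟩ := jacobiWeight_mul_comp_tanh_ode (hasDerivAt_jacobiP n α β)
    (hasDerivAt_jacobiPDeriv n α β) (jacobiP_ode n α β) hY
  refine ⟨hdiff, fun z => ?_⟩
  rw [hΩ, hL]
  linear_combination hode z

theorem stmt4 (n : ℕ) (α β : ℝ) (hα : -1 < α) (hβ : -1 < β)
    (Y : ℝ → ℝ)
    (hY : ∀ z : ℝ,
      Y z = (1 - Real.tanh z) ^ (α / 2) * (1 + Real.tanh z) ^ (β / 2) *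
        jacobiP n α β (Real.tanh z))
    (L : ℝ) (hL : L = 2 * n + α + β + 1)
    (Ω : ℝ → ℝ)
    (hΩ : ∀ z : ℝ,
      Ω z = (1 / 4) * ((L ^ 2 - 1) * (1 - Real.tanh z ^ 2)
        - 2 * α ^ 2 * (1 + Real.tanh z) - 2 * β ^ 2 * (1 - Real.tanh z))) :
    (∀ z : ℝ, DifferentiableAt ℝ Y z ∧ DifferentiableAt ℝ (deriv Y) z) ∧
    ∀ z : ℝ, deriv (deriv Y) z + Ω z * Y z = 0 :=
  stmt4_general n α β Y hY L hL Ω hΩ
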